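/- If Λ_∘ and Λ_∘' are two Hermitian matrices both satisfying G*ΛG > 0 on the unit circle and ∫ G(Ψ/(G*ΛG))G* = I, then G*(Λ_∘ - Λ_∘')G ≡ 0 on the unit circle, i.e., Λ_∘ - Λ_∘' ∈ (Range Γ)^⊥. Conversely, if Λ_∘ satisfies both conditions and X ∈ (Range Γ)^⊥, then Λ_∘ + X also satisfies both conditions. -/

import Mathlib

open Matrix MeasureTheory Real Filter
open scoped ComplexOrder

noncomputable section

abbrev Mat (n : ℕ) := Matrix (Fin n) (Fin n) ℂ
abbrev Vec (n : ℕ) := Matrix (Fin n) (Fin 1) ℂ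

/-- the point e^{jθ} on the unit circle -/
def circPt (θ : ℝ) : ℂ := Complex.exp (θ * Complex.I)

/-- G(e^{jθ}) = (e^{jθ} I - A)⁻¹ B -/
def Gm {n : ℕ} (A : Mat n) (B : Vec n) (θ : ℝ) : Vec n :=
  (circPt θ • (1 : Mat n) - A)⁻¹ * B

/-- the scalar G* Λ G at e^{jθ} -/
def quad {n : ℕ} (A : Mat n) (B : Vec n) (Λ : Mat n) (θ : ℝ) : ℂ :=
  ((Gm A B θ)ᴴ * Λ * Gm A B θ) 0 0

/-- normalized entrywise matrix integral over the unit circle -/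
def mInt {n : ℕ} (f : ℝ → Mat n) : Mat n :=
  Matrix.of fun i j => (1 / (2 * π) : ℝ) • ∫ θ in (0:ℝ)..(2 * π), f θ i j

/-- normalized scalar (complex) integral over the unit circle -/
def sInt (f : ℝ → ℂ) : ℂ := (1 / (2 * π) : ℝ) • ∫ θ in (0:ℝ)..(2 * π), f θ

/-- normalized scalar (real) integral over the unit circle -/
def sIntR (f : ℝ → ℝ) : ℝ := (1 / (2 * π)) * ∫ θ in (0:ℝ)..(2 * π), f θ

/-- all eigenvalues of A lie in the open unit disc -/
def IsStable {n : ℕ} (A : Mat n) : Prop := ∀ μ ∈ spectrum ℂ A, ‖μ‖ < 1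

/-- (A,B) is a reachable pair: the controllability matrix has full rank -/
def Reachable {n : ℕ} (A : Mat n) (B : Vec n) : Prop :=
  (Matrix.of fun (i : Fin n) (k : Fin n) => (A ^ (k : ℕ) * B) i 0).rank = n

open scoped Classical in
/-- positive semidefinite square root (junk value 0 off the psd cone) -/
def msqrt {n : ℕ} (M : Mat n) : Mat n :=
  if h : M.PosSemidef then (h.1.eigenvectorUnitary : Mat n) *
    diagonal ((↑) ∘ (√·) ∘ h.1.eigenvalues) * (star (h.1.eigenvectorUnitary : Mat n)) else 0

/-- the moment map ∫ G (Ψ/(G*ΛG)) G* -/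
def moment {n : ℕ} (A : Mat n) (B : Vec n) (Ψ : ℝ → ℝ) (Λ : Mat n) : Mat n :=
  mInt (fun θ => ((Ψ θ : ℂ) / quad A B Λ θ) • (Gm A B θ * (Gm A B θ)ᴴ))

/-- the iteration map Θ(Λ) = ∫ Λ^{1/2} G (Ψ/(G*ΛG)) G* Λ^{1/2} -/
def Theta {n : ℕ} (A : Mat n) (B : Vec n) (Ψ : ℝ → ℝ) (Λ : Mat n) : Mat n :=
  mInt (fun θ => ((Ψ θ : ℂ) / quad A B Λ θ) •
    (msqrt Λ * (Gm A B θ * (Gm A B θ)ᴴ) * msqrt Λ))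

/-- the linearization M of Θ at Λ:
M(X) = X - Λ^{1/2} ∫ (GΨG*/(G*ΛG)) (G*XG/(G*ΛG)) Λ^{1/2} -/
def Mlin {n : ℕ} (A : Mat n) (B : Vec n) (Ψ : ℝ → ℝ) (Λ : Mat n) (X : Mat n) : Mat n :=
  X - msqrt Λ * mInt (fun θ =>
    (((Ψ θ : ℂ) * (((Gm A B θ)ᴴ * X * Gm A B θ) 0 0)) / (quad A B Λ θ) ^ 2) •
      (Gm A B θ * (Gm A B θ)ᴴ)) * msqrt Λ

/-- the range of the operator Γ : Φ ↦ ∫ G Φ G* on continuous (2π-periodic) functions -/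
def RangeGamma {n : ℕ} (A : Mat n) (B : Vec n) : Set (Mat n) :=
  {M | ∃ Φ : ℝ → ℝ, Continuous Φ ∧ (∀ θ, Φ (θ + 2 * π) = Φ θ) ∧
    M = mInt (fun θ => (Φ θ : ℂ) • (Gm A B θ * (Gm A B θ)ᴴ))}

/-! For a solution `Λ₀` with `q₀ = G*Λ₀G`, pairing `∫ G (Ψ/q₀) G* = I` with a Hermitian `D` gives
`tr D = ∫ Ψ · G*DG / q₀`. For two solutions with `q = G*ΛG`, `q' = G*Λ'G` and `D = Λ - Λ'`,
subtracting the two instances gives `∫ Ψ (q - q')² / (q q') = 0`. The integrand is continuous and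
nonnegative, so `q = q'` on a period, hence everywhere. The converse is immediate since both
conditions see `Λ` only through `G*ΛG`. -/

lemma eqOn_zero_of_intervalIntegral_eq_zero {f : ℝ → ℝ} {a b : ℝ} (hab : a ≤ b)
    (hc : Continuous f) (hnn : 0 ≤ f) (hint : ∫ x in a..b, f x = 0) :
    Set.EqOn f 0 (Set.Ioc a b) := by
  have hae : f =ᵐ[volume.restrict (Set.Ioc a b)] 0 :=
    (intervalIntegral.integral_eq_zero_iff_of_le_of_nonneg_ae hab
      (ae_of_all _ hnn) (hc.intervalIntegrable a b)).1 hint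
  exact Measure.eqOn_Ioc_of_ae_eq volume hae hc.continuousOn continuousOn_const

lemma Function.Periodic.eq_of_eqOn_Ioc {α : Type*} [AddCommGroup α] {f g : ℝ → α} {T a : ℝ}
    (hf : Function.Periodic f T) (hg : Function.Periodic g T) (hT : 0 < T)
    (hfg : Set.EqOn f g (Set.Ioc a (a + T))) : f = g := by
  funext x
  obtain ⟨y, hy, hxy⟩ := (hf.sub hg).exists_mem_Ioc hT x a
  exact sub_eq_zero.1 (hxy.trans (sub_eq_zero.2 (hfg hy)))

lemma norm_circPt (θ : ℝ) : ‖circPt θ‖ = 1 := by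
  simp [circPt, Complex.norm_exp]

lemma circPt_periodic : Function.Periodic circPt (2 * π) := fun θ => by
  simp only [circPt]
  push_cast
  rw [add_mul, Complex.exp_add, Complex.exp_two_pi_mul_I, mul_one]

lemma continuous_circPt : Continuous circPt := by
  unfold circPt; fun_prop

section

variable {n : ℕ} {A : Mat n} (B : Vec n)

lemma Gm_periodic : Function.Periodic (Gm A B) (2 * π) := fun θ => by
  simp only [Gm, circPt_periodic θ]

lemma quad_periodic (Λ : Mat n) : Function.Periodic (quad A B Λ) (2 * π) := fun θ => by
  simp only [quad, Gm_periodic B θ]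

lemma IsStable.isUnit_det_circPt_smul_one_sub (hA : IsStable A) (θ : ℝ) :
    IsUnit (circPt θ • (1 : Mat n) - A).det := by
  have hθ : circPt θ ∉ spectrum ℂ A := fun h => (hA _ h).ne (norm_circPt θ)
  rw [← Matrix.isUnit_iff_isUnit_det, ← Algebra.algebraMap_eq_smul_one]
  exact spectrum.notMem_iff.mp hθ

lemma IsStable.continuous_Gm (hA : IsStable A) : Continuous (Gm A B) := by
  have hres : Continuous fun θ => circPt θ • (1 : Mat n) - A :=
    (continuous_circPt.smul continuous_const).sub continuous_const
  have hinv : Continuous fun θ => (circPt θ • (1 : Mat n) - A)⁻¹ :=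
    continuous_iff_continuousAt.2 fun θ =>
      (continuousAt_matrix_inv _ (NormedRing.inverse_continuousAt
        (hA.isUnit_det_circPt_smul_one_sub θ).unit)).comp
        (f := fun θ => circPt θ • (1 : Mat n) - A) hres.continuousAt
  exact hinv.matrix_mul continuous_const

lemma IsStable.continuous_quad (hA : IsStable A) (Λ : Mat n) : Continuous (quad A B Λ) :=
  let hG := hA.continuous_Gm B
  ((hG.matrix_conjTranspose.matrix_mul continuous_const).matrix_mul hG).matrix_elem 0 0

variable {B}

lemma quad_add (Λ X : Mat n) (θ : ℝ) :
    quad A B (Λ + X) θ = quad A B Λ θ + quad A B X θ := by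
  simp [quad, Matrix.mul_add, Matrix.add_mul]

lemma quad_sub (Λ Λ' : Mat n) (θ : ℝ) :
    quad A B (Λ - Λ') θ = quad A B Λ θ - quad A B Λ' θ := by
  simp [quad, Matrix.mul_sub, Matrix.sub_mul]

lemma quad_eq_zero_iff {Λ : Mat n} {θ : ℝ} :
    quad A B Λ θ = 0 ↔ (Gm A B θ)ᴴ * Λ * Gm A B θ = 0 := by
  refine ⟨fun h => ?_, fun h => by rw [quad, h, Matrix.zero_apply]⟩
  ext i j
  rwa [Subsingleton.elim i 0, Subsingleton.elim j 0]

lemma Matrix.IsHermitian.quad_eq_ofReal_re {Λ : Mat n} (hΛ : Λ.IsHermitian) (θ : ℝ) :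
    quad A B Λ θ = ((quad A B Λ θ).re : ℂ) := by
  refine (Complex.conj_eq_iff_re.mp ?_).symm
  have hself : ((Gm A B θ)ᴴ * Λ * Gm A B θ)ᴴ = (Gm A B θ)ᴴ * Λ * Gm A B θ := by
    rw [conjTranspose_mul, conjTranspose_mul, conjTranspose_conjTranspose, hΛ.eq, Matrix.mul_assoc]
  exact congrFun (congrFun hself 0) 0

end

lemma trace_mul_smul_mul_conjTranspose {n : ℕ} (D : Mat n) (c : ℂ) (v : Vec n) :
    trace (D * (c • (v * vᴴ))) = c * (vᴴ * D * v) 0 0 := by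
  rw [mul_smul_comm, trace_smul, ← Matrix.mul_assoc, trace_mul_comm, ← Matrix.mul_assoc,
    trace_fin_one, smul_eq_mul]

lemma trace_mul_mInt {n : ℕ} (D : Mat n) {f : ℝ → Mat n} (hf : Continuous f) :
    trace (D * mInt f) = sInt fun θ => trace (D * f θ) := by
  have hterm : ∀ i j, Continuous fun θ => D i j * f θ j i :=
    fun i j => continuous_const.mul (hf.matrix_elem j i)
  simp only [sInt, trace, diag, mul_apply, mInt, of_apply, mul_smul_comm]
  rw [intervalIntegral.integral_finsetSum fun i _ =>
    (continuous_finsetSum _ fun j _ => hterm i j).intervalIntegrable _ _, Finset.smul_sum]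
  refine Finset.sum_congr rfl fun i _ => ?_
  rw [intervalIntegral.integral_finsetSum fun j _ => (hterm i j).intervalIntegrable _ _,
    Finset.smul_sum]
  simp only [intervalIntegral.integral_const_mul]

section

variable {n : ℕ} {A : Mat n} (B : Vec n) {Ψ : ℝ → ℝ}

lemma IsStable.trace_mul_moment (hA : IsStable A) (hΨc : Continuous Ψ) {Λ : Mat n}
    (hq : ∀ θ, quad A B Λ θ ≠ 0) (D : Mat n) :
    trace (D * moment A B Ψ Λ) = sInt fun θ => Ψ θ / quad A B Λ θ * quad A B D θ := by
  have hG := hA.continuous_Gm B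
  rw [moment, trace_mul_mInt D]
  · simp only [trace_mul_smul_mul_conjTranspose, quad]
  · exact ((Complex.continuous_ofReal.comp hΨc).div (hA.continuous_quad B Λ) hq).smul
      (hG.matrix_mul hG.matrix_conjTranspose)

lemma intervalIntegral_sub_eq_zero_of_sInt_eq {f g : ℝ → ℂ} (hf : Continuous f)
    (hg : Continuous g) (h : sInt f = sInt g) : ∫ θ in (0:ℝ)..(2 * π), (f θ - g θ) = 0 := by
  rw [intervalIntegral.integral_sub (hf.intervalIntegrable _ _) (hg.intervalIntegrable _ _),
    smul_right_injective ℂ (by positivity : (1 / (2 * π) : ℝ) ≠ 0) h, sub_self]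

lemma integral_sq_quad_sub_div_eq_zero (hA : IsStable A) (hΨc : Continuous Ψ) {Λ Λ' : Mat n}
    (hΛ : Λ.IsHermitian) (hΛ' : Λ'.IsHermitian)
    (hq : ∀ θ, quad A B Λ θ ≠ 0) (hm : moment A B Ψ Λ = 1)
    (hq' : ∀ θ, quad A B Λ' θ ≠ 0) (hm' : moment A B Ψ Λ' = 1) :
    ∫ θ in (0:ℝ)..(2 * π), Ψ θ * ((quad A B Λ θ).re - (quad A B Λ' θ).re) ^ 2 /
      ((quad A B Λ θ).re * (quad A B Λ' θ).re) = 0 := by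
  have hpaired : ∀ θ, Ψ θ / quad A B Λ θ * quad A B (Λ - Λ') θ
      - Ψ θ / quad A B Λ' θ * quad A B (Λ - Λ') θ
      = ((-(Ψ θ * ((quad A B Λ θ).re - (quad A B Λ' θ).re) ^ 2 /
          ((quad A B Λ θ).re * (quad A B Λ' θ).re)) : ℝ) : ℂ) := by
    intro θ
    obtain ⟨q, hq_eq⟩ : ∃ q : ℝ, quad A B Λ θ = q := ⟨_, hΛ.quad_eq_ofReal_re θ⟩
    obtain ⟨q', hq'_eq⟩ : ∃ q' : ℝ, quad A B Λ' θ = q' := ⟨_, hΛ'.quad_eq_ofReal_re θ⟩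
    have hq0 : (q : ℂ) ≠ 0 := hq_eq ▸ hq θ
    have hq'0 : (q' : ℂ) ≠ 0 := hq'_eq ▸ hq' θ
    rw [quad_sub, hq_eq, hq'_eq, Complex.ofReal_re, Complex.ofReal_re]
    push_cast
    field_simp
    ring
  have hcont : ∀ Λ₀ : Mat n, (∀ θ, quad A B Λ₀ θ ≠ 0) →
      Continuous fun θ => Ψ θ / quad A B Λ₀ θ * quad A B (Λ - Λ') θ := fun Λ₀ hq₀ =>
    ((Complex.continuous_ofReal.comp hΨc).div (hA.continuous_quad B Λ₀) hq₀).mul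
      (hA.continuous_quad B _)
  have h := intervalIntegral_sub_eq_zero_of_sInt_eq (hcont Λ hq) (hcont Λ' hq')
    (by rw [← hA.trace_mul_moment B hΨc hq, ← hA.trace_mul_moment B hΨc hq', hm, hm'])
  simp only [hpaired, intervalIntegral.integral_ofReal, intervalIntegral.integral_neg] at h
  exact neg_eq_zero.1 (Complex.ofReal_eq_zero.1 h)

lemma quad_eq_of_moment_eq_one (hA : IsStable A) (hΨc : Continuous Ψ) (hΨpos : ∀ θ, 0 < Ψ θ)
    {Λ Λ' : Mat n} (hΛ : Λ.IsHermitian) (hΛ' : Λ'.IsHermitian)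
    (hq : ∀ θ, 0 < (quad A B Λ θ).re) (hm : moment A B Ψ Λ = 1)
    (hq' : ∀ θ, 0 < (quad A B Λ' θ).re) (hm' : moment A B Ψ Λ' = 1) :
    quad A B Λ = quad A B Λ' := by
  set q := fun θ => (quad A B Λ θ).re
  set q' := fun θ => (quad A B Λ' θ).re
  have hne : ∀ {Λ₀ : Mat n}, (∀ θ, 0 < (quad A B Λ₀ θ).re) → ∀ θ, quad A B Λ₀ θ ≠ 0 :=
    fun hq₀ θ h => (hq₀ θ).ne' (by rw [h, Complex.zero_re])
  have hqc : Continuous q := Complex.continuous_re.comp (hA.continuous_quad B Λ)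
  have hqc' : Continuous q' := Complex.continuous_re.comp (hA.continuous_quad B Λ')
  have hvanish := eqOn_zero_of_intervalIntegral_eq_zero Real.two_pi_pos.le
    ((hΨc.mul ((hqc.sub hqc').pow 2)).div (hqc.mul hqc') fun θ => (mul_pos (hq θ) (hq' θ)).ne')
    (fun θ => div_nonneg (mul_nonneg (hΨpos θ).le (sq_nonneg _)) (mul_pos (hq θ) (hq' θ)).le)
    (integral_sq_quad_sub_div_eq_zero B hA hΨc hΛ hΛ' (hne hq) hm (hne hq') hm')
  refine (quad_periodic B Λ).eq_of_eqOn_Ioc (a := 0) (quad_periodic B Λ') Real.two_pi_pos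
    fun θ hθ => ?_
  have hre : q θ = q' θ := by
    have hΨθ := (hΨpos θ).ne'
    have hqθ : q θ ≠ 0 := (hq θ).ne'
    have hq'θ : q' θ ≠ 0 := (hq' θ).ne'
    have h := hvanish (by rwa [zero_add] at hθ)
    simpa only [Pi.div_apply, Pi.mul_apply, Pi.pow_apply, Pi.sub_apply, Pi.zero_apply,
      div_eq_zero_iff, mul_eq_zero, pow_eq_zero_iff two_ne_zero, sub_eq_zero, hΨθ, hqθ, hq'θ,
      false_or, or_false] using h
  rw [hΛ.quad_eq_ofReal_re, hΛ'.quad_eq_ofReal_re]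
  exact congrArg _ hre

end

theorem stmt7_general {n : ℕ} (A : Mat n) (B : Vec n) (Ψ : ℝ → ℝ)
    (hA : IsStable A)
    (hΨc : Continuous Ψ) (hΨpos : ∀ θ, 0 < Ψ θ) :
    (∀ Λ Λ' : Mat n, Λ.IsHermitian → Λ'.IsHermitian →
      (∀ θ, 0 < (quad A B Λ θ).re) → moment A B Ψ Λ = 1 →
      (∀ θ, 0 < (quad A B Λ' θ).re) → moment A B Ψ Λ' = 1 →
      ∀ θ : ℝ, (Gm A B θ)ᴴ * (Λ - Λ') * Gm A B θ = 0) ∧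
    (∀ Λ X : Mat n, Λ.IsHermitian →
      (∀ θ, 0 < (quad A B Λ θ).re) → moment A B Ψ Λ = 1 →
      X.IsHermitian → (∀ θ : ℝ, (Gm A B θ)ᴴ * X * Gm A B θ = 0) →
      (∀ θ, 0 < (quad A B (Λ + X) θ).re) ∧ moment A B Ψ (Λ + X) = 1) := by
  refine ⟨fun Λ Λ' hΛ hΛ' hq hm hq' hm' θ => ?_, fun Λ X _ hq hm _ hX => ?_⟩
  · have hquad := quad_eq_of_moment_eq_one B hA hΨc hΨpos hΛ hΛ' hq hm hq' hm'
    rw [← quad_eq_zero_iff, quad_sub, hquad, sub_self]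
  · have hquad : quad A B (Λ + X) = quad A B Λ := by
      funext θ
      rw [quad_add, quad_eq_zero_iff.2 (hX θ), add_zero]
    rw [moment, hquad]
    exact ⟨hq, hm⟩

/-- any two solutions of the dual stationarity conditions differ by
an element of (Range Γ)^⊥, and conversely the conditions are invariant under
addition of elements of (Range Γ)^⊥. -/
theorem stmt7 {n : ℕ} (A : Mat n) (B : Vec n) (Ψ : ℝ → ℝ)
    (hA : IsStable A) (hR : Reachable A B)
    (hΨc : Continuous Ψ) (hΨpos : ∀ θ, 0 < Ψ θ) :
    (∀ Λ Λ' : Mat n, Λ.IsHermitian → Λ'.IsHermitian →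
      (∀ θ, 0 < (quad A B Λ θ).re) → moment A B Ψ Λ = 1 →
      (∀ θ, 0 < (quad A B Λ' θ).re) → moment A B Ψ Λ' = 1 →
      ∀ θ : ℝ, (Gm A B θ)ᴴ * (Λ - Λ') * Gm A B θ = 0) ∧
    (∀ Λ X : Mat n, Λ.IsHermitian →
      (∀ θ, 0 < (quad A B Λ θ).re) → moment A B Ψ Λ = 1 →
      X.IsHermitian → (∀ θ : ℝ, (Gm A B θ)ᴴ * X * Gm A B θ = 0) →
      (∀ θ, 0 < (quad A B (Λ + X) θ).re) ∧ moment A B Ψ (Λ + X) = 1) :=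
  stmt7_general A B Ψ hA hΨc hΨpos
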